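/- Suppose a_j ≤ b/w^(1/p) for all j ∈ J (finite) and the set S = { x ∈ [0,1]^J : max_j φ(a_j,x_j) = b } is nonempty. Define X̄ ∈ [0,1]^J by X̄_j = ((b^p - w·a_j^p)/(1-w))^(1/p) if j ∈ J' (i.e., b^p < 1-w or a_j ≥ ((b^p+w-1)/w)^(1/p)) and X̄_j = 1 otherwise. Then X̄ ∈ S and x ≤ X̄ componentwise for every x ∈ S, i.e., X̄ is the maximum solution of S. -/

import Mathlib

open scoped Classical

noncomputable def phi (w p a x : ℝ) : ℝ := (w * a ^ p + (1 - w) * x ^ p) ^ (1 / p)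

/-!
The problem decouples coordinatewise: `x ∈ S` iff `φ(a_j, x_j) ≤ b` for every `j`, with equality
for some `j`. As `φ(a, ·)` is increasing on `[0, ∞)`, the greatest `x ∈ [0,1]` with `φ(a, x) ≤ b`
is the inverse value `((b^p - w a^p)/(1-w))^(1/p)` when `b ≤ φ(a, 1)`, and `1` otherwise; the
condition defining `J'` is exactly `b ≤ φ(a_j, 1)`. The vector of these coordinatewise maxima lies
above every element of `S`, and it lies in `S` itself: at an index where some solution attains `b`,
raising that coordinate to its maximum keeps `φ` at least `b`.
-/

open Real Set

section Order

variable {J α β : Type*} [Fintype J] [Nonempty J] [Preorder α] [LinearOrder β]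

theorem isGreatest_setOf_sup'_eq (I : Set α) (f : J → α → β) (hf : ∀ j, MonotoneOn (f j) I)
    (b : β) (m : J → α) (hm : ∀ j, IsGreatest {x ∈ I | f j x ≤ b} (m j))
    (hne : {x : J → α | (∀ j, x j ∈ I) ∧
      Finset.univ.sup' Finset.univ_nonempty (fun j => f j (x j)) = b}.Nonempty) :
    IsGreatest {x : J → α | (∀ j, x j ∈ I) ∧
      Finset.univ.sup' Finset.univ_nonempty (fun j => f j (x j)) = b} m := by
  obtain ⟨x₀, hx₀I, hx₀b⟩ := hne
  obtain ⟨j₀, -, hj₀⟩ := Finset.exists_mem_eq_sup' Finset.univ_nonempty (fun j => f j (x₀ j))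
  have hx₀j₀ : x₀ j₀ ≤ m j₀ := (hm j₀).2 ⟨hx₀I j₀, hj₀ ▸ hx₀b.le⟩
  refine ⟨⟨fun j => (hm j).1.1, le_antisymm ?_ ?_⟩, fun x ⟨hxI, hxb⟩ j => ?_⟩
  · exact Finset.sup'_le _ _ fun j _ => (hm j).1.2
  · calc b = f j₀ (x₀ j₀) := hx₀b ▸ hj₀
      _ ≤ f j₀ (m j₀) := hf j₀ (hx₀I j₀) (hm j₀).1.1 hx₀j₀
      _ ≤ _ := Finset.le_sup' (fun j => f j (m j)) (Finset.mem_univ j₀)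
  · exact (hm j).2 ⟨hxI j, hxb ▸ Finset.le_sup' (fun j => f j (x j)) (Finset.mem_univ j)⟩

end Order

section Phi

variable {w p a b x : ℝ}

theorem phi_le_iff (hw : w ∈ Icc (0:ℝ) 1) (hp : 0 < p) (ha : 0 ≤ a) (hx : 0 ≤ x) (hb : 0 ≤ b) :
    phi w p a x ≤ b ↔ w * a ^ p + (1 - w) * x ^ p ≤ b ^ p := by
  have : 0 ≤ 1 - w := sub_nonneg.2 hw.2
  rw [phi, one_div, rpow_inv_le_iff_of_pos (by have := hw.1; positivity) hb hp]

theorem le_phi_iff (hw : w ∈ Icc (0:ℝ) 1) (hp : 0 < p) (ha : 0 ≤ a) (hx : 0 ≤ x) (hb : 0 ≤ b) :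
    b ≤ phi w p a x ↔ b ^ p ≤ w * a ^ p + (1 - w) * x ^ p := by
  have : 0 ≤ 1 - w := sub_nonneg.2 hw.2
  rw [phi, one_div, le_rpow_inv_iff_of_pos hb (by have := hw.1; positivity) hp]

theorem monotoneOn_phi (hw : w ∈ Icc (0:ℝ) 1) (hp : 0 < p) (ha : 0 ≤ a) :
    MonotoneOn (phi w p a) (Ici 0) := by
  intro x (hx : 0 ≤ x) y _ hxy
  have : 0 ≤ 1 - w := sub_nonneg.2 hw.2
  have := hw.1
  unfold phi
  gcongr

theorem le_phi_one_iff (hw : w ∈ Ioo (0:ℝ) 1) (hp : 0 < p) (ha : 0 ≤ a) (hb : 0 ≤ b) :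
    b ≤ phi w p a 1 ↔ b ^ p < 1 - w ∨ ((b ^ p + w - 1) / w) ^ (1 / p) ≤ a := by
  rw [le_phi_iff (Ioo_subset_Icc_self hw) hp ha zero_le_one hb, one_rpow, mul_one]
  rcases lt_or_ge (b ^ p) (1 - w) with hbw | hbw
  · simp only [hbw, true_or, iff_true]
    have := rpow_nonneg ha p
    nlinarith [hw.1]
  · have hc : 0 ≤ (b ^ p + w - 1) / w := div_nonneg (by linarith) hw.1.le
    rw [one_div, rpow_inv_le_iff_of_pos hc ha hp, div_le_iff₀ hw.1]
    simp only [hbw.not_gt, false_or]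
    constructor <;> intro h <;> linarith

theorem mul_rpow_le_rpow_of_le_div (hw : 0 < w) (hp : 0 < p) (ha : 0 ≤ a)
    (h : a ≤ b / w ^ (1 / p)) : w * a ^ p ≤ b ^ p := by
  have hwp : 0 < w ^ (1 / p) := rpow_pos_of_pos hw _
  calc w * a ^ p = (a * w ^ (1 / p)) ^ p := by
        rw [mul_rpow ha hwp.le, one_div, rpow_inv_rpow hw.le hp.ne', mul_comm]
    _ ≤ b ^ p := by
        gcongr
        exact (le_div_iff₀ hwp).1 h

noncomputable def phiInv (w p a b : ℝ) : ℝ := ((b ^ p - w * a ^ p) / (1 - w)) ^ (1 / p)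

theorem le_phiInv_iff (hw : w ∈ Ioo (0:ℝ) 1) (hp : 0 < p) (ha : 0 ≤ a) (hb : 0 ≤ b)
    (hwa : w * a ^ p ≤ b ^ p) (hx : 0 ≤ x) :
    x ≤ phiInv w p a b ↔ phi w p a x ≤ b := by
  have h1w : 0 < 1 - w := sub_pos.2 hw.2
  rw [phiInv, one_div, le_rpow_inv_iff_of_pos hx (div_nonneg (by linarith) h1w.le) hp,
    le_div_iff₀ h1w, phi_le_iff (Ioo_subset_Icc_self hw) hp ha hx hb]
  constructor <;> intro h <;> linarith

theorem phiInv_le_one_iff (hw : w ∈ Ioo (0:ℝ) 1) (hp : 0 < p) (ha : 0 ≤ a) (hb : 0 ≤ b)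
    (hwa : w * a ^ p ≤ b ^ p) :
    phiInv w p a b ≤ 1 ↔ b ≤ phi w p a 1 := by
  have h1w : 0 < 1 - w := sub_pos.2 hw.2
  rw [phiInv, one_div, rpow_inv_le_iff_of_pos (div_nonneg (by linarith) h1w.le) zero_le_one hp,
    one_rpow, div_le_one h1w, le_phi_iff (Ioo_subset_Icc_self hw) hp ha zero_le_one hb,
    one_rpow]
  constructor <;> intro h <;> linarith

theorem isGreatest_ite_phiInv (hw : w ∈ Ioo (0:ℝ) 1) (hp : 0 < p) (ha : 0 ≤ a) (hb : 0 ≤ b)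
    (hwa : w * a ^ p ≤ b ^ p) (c : Prop) [Decidable c] (hc : c ↔ b ≤ phi w p a 1) :
    IsGreatest {x ∈ Icc 0 1 | phi w p a x ≤ b} (if c then phiInv w p a b else 1) := by
  split_ifs with h <;> rw [hc] at h
  · have hinv : 0 ≤ phiInv w p a b := rpow_nonneg (div_nonneg (by linarith) (by linarith [hw.2])) _
    exact ⟨⟨⟨hinv, (phiInv_le_one_iff hw hp ha hb hwa).2 h⟩,
        (le_phiInv_iff hw hp ha hb hwa hinv).1 le_rfl⟩,
      fun x hx => (le_phiInv_iff hw hp ha hb hwa hx.1.1).2 hx.2⟩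
  · exact ⟨⟨right_mem_Icc.2 zero_le_one, (not_le.1 h).le⟩, fun x hx => hx.1.2⟩

end Phi

theorem stmt7 {J : Type*} [Fintype J] [Nonempty J] (w p : ℝ)
    (hw : w ∈ Set.Ioo (0:ℝ) 1) (hp : 0 < p)
    (a : J → ℝ) (ha : ∀ j, a j ∈ Set.Icc (0:ℝ) 1) (b : ℝ) (hb : b ∈ Set.Icc (0:ℝ) 1)
    (hA : ∀ j, a j ≤ b / w ^ (1 / p))
    (S : Set (J → ℝ))
    (hS : S = {x : J → ℝ | (∀ j, x j ∈ Set.Icc (0:ℝ) 1) ∧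
        Finset.univ.sup' Finset.univ_nonempty (fun j => phi w p (a j) (x j)) = b})
    (hne : S.Nonempty)
    (Xbar : J → ℝ)
    (hXbar : ∀ j, Xbar j =
      if b ^ p < 1 - w ∨ ((b ^ p + w - 1) / w) ^ (1 / p) ≤ a j
      then ((b ^ p - w * (a j) ^ p) / (1 - w)) ^ (1 / p) else 1) :
    Xbar ∈ S ∧ ∀ x ∈ S, x ≤ Xbar := by
  have hwa j : w * a j ^ p ≤ b ^ p :=
    mul_rpow_le_rpow_of_le_div hw.1 hp (ha j).1 (hA j)
  have hmax j : IsGreatest {x ∈ Icc 0 1 | phi w p (a j) x ≤ b} (Xbar j) := by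
    rw [hXbar j]
    exact isGreatest_ite_phiInv hw hp (ha j).1 hb.1 (hwa j) _
      (le_phi_one_iff hw hp (ha j).1 hb.1).symm
  have hmono j : MonotoneOn (phi w p (a j)) (Icc 0 1) :=
    (monotoneOn_phi (Ioo_subset_Icc_self hw) hp (ha j).1).mono Icc_subset_Ici_self
  subst hS
  exact isGreatest_setOf_sup'_eq _ _ hmono b Xbar hmax hne
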